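/- arXiv:2302.01362 — 2 statements merged into one kernel-verified Lean document; each statement's English description precedes it below -/
import Mathlib

section
/- Suppose 𝒮 ⊆ T((ℝ^d)) is closed under all dilations d_λ for λ > 0, is completely metrizable, and the maps x ↦ ⟨π_n(u), π_n(x)⟩ are continuous for each u ∈ 𝒮* and each n. Then for every u ∈ 𝒮* there exists a nonempty open subset U ⊆ 𝒮 on which x ↦ ⟨u, x⟩ is continuous and is the uniform limit of the partial sums Σ_{n=0}^N ⟨π_n(u), π_n(x)⟩. -/
/-- The extended tensor algebra `T((ℝ^d))`, as formal series of coefficients indexed by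
words in `d` letters. -/
abbrev TA (d : ℕ) := List (Fin d) → ℝ

/-- The level-`n` pairing `⟨π_n(u), π_n(x)⟩`, a (finite) sum over all words of length `n`. -/
noncomputable def levelPair {d : ℕ} (u x : TA d) (n : ℕ) : ℝ :=
  ∑' I : {I : List (Fin d) // I.length = n}, u I * x I

/-- The dilation `d_λ`, multiplying the level-`n` component by `λ^n`. -/
def dil {d : ℕ} (lam : ℝ) (x : TA d) : TA d := fun I => lam ^ I.length * x I

/-!
Summability of `n ↦ ⟨π_n u, π_n (d_2 x)⟩ = 2^n ⟨π_n u, π_n x⟩` shows that every `x ∈ 𝒮` lies in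
one of the closed sets `{x | ∀ n, |⟨π_n u, π_n x⟩| ≤ K 2^{-n}}`, `K ∈ ℕ`. By Baire, one of them
has nonempty interior `U`, and on `U` the Weierstrass M-test with the dominating series
`K 2^{-n}` gives uniform convergence of the partial sums, hence continuity of the limit.
-/

open Filter Set

lemma levelPair_dil {d : ℕ} (u x : TA d) (lam : ℝ) (n : ℕ) :
    levelPair u (dil lam x) n = lam ^ n * levelPair u x n := by
  unfold levelPair dil
  rw [← tsum_mul_left]
  refine tsum_congr fun ⟨I, hI⟩ => ?_
  simp only [hI]
  ring

lemma exists_norm_le_mul_inv_pow_of_summable {a : ℕ → ℝ} {r : ℝ} (hr : 0 < r)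
    (ha : Summable fun n => r ^ n * a n) : ∃ C : ℝ, ∀ n, ‖a n‖ ≤ C * r⁻¹ ^ n := by
  obtain ⟨C, hC⟩ := ha.tendsto_atTop_zero.norm.bddAbove_range
  refine ⟨C, fun n => ?_⟩
  have hrn : 0 < r ^ n := pow_pos hr n
  have hbound : r ^ n * ‖a n‖ ≤ C := by
    simpa only [norm_mul, Real.norm_of_nonneg hrn.le] using hC ⟨n, rfl⟩
  rw [inv_pow, ← div_eq_mul_inv, le_div_iff₀ hrn, mul_comm]
  exact hbound

lemma TendstoUniformlyOn.comp_add_one {α β : Type*} [UniformSpace β] {F : ℕ → α → β}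
    {f : α → β} {s : Set α} (h : TendstoUniformlyOn F f atTop s) :
    TendstoUniformlyOn (fun N => F (N + 1)) f atTop s :=
  fun v hv => (tendsto_add_atTop_nat 1).eventually (h v hv)

section Baire

variable {X E : Type*} [TopologicalSpace X] [BaireSpace X] [Nonempty X]
  [NormedAddCommGroup E] {f : ℕ → X → E} {b : ℕ → ℝ}

lemma exists_nonempty_interior_uniform_bound (hf : ∀ n, Continuous (f n)) (hb : ∀ n, 0 ≤ b n)
    (hdom : ∀ x, ∃ C : ℝ, ∀ n, ‖f n x‖ ≤ C * b n) :
    ∃ K : ℕ, (interior {x | ∀ n, ‖f n x‖ ≤ K * b n}).Nonempty := by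
  refine nonempty_interior_of_iUnion_of_closed (fun K => ?_) (eq_univ_of_forall fun x => ?_)
  · simp only [ofPred_forall]
    exact isClosed_iInter fun n => isClosed_le (hf n).norm continuous_const
  · obtain ⟨C, hC⟩ := hdom x
    exact mem_iUnion.2 ⟨⌈C⌉₊, fun n =>
      (hC n).trans (mul_le_mul_of_nonneg_right (Nat.le_ceil C) (hb n))⟩

lemma exists_isOpen_tendstoUniformlyOn_tsum [CompleteSpace E] (hf : ∀ n, Continuous (f n))
    (hb : ∀ n, 0 ≤ b n) (hbs : Summable b) (hdom : ∀ x, ∃ C : ℝ, ∀ n, ‖f n x‖ ≤ C * b n) :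
    ∃ U : Set X, IsOpen U ∧ U.Nonempty ∧
      ContinuousOn (fun x => ∑' n, f n x) U ∧
      TendstoUniformlyOn (fun N x => ∑ n ∈ Finset.range (N + 1), f n x)
        (fun x => ∑' n, f n x) atTop U := by
  obtain ⟨K, hK⟩ := exists_nonempty_interior_uniform_bound hf hb hdom
  have hMtest : ∀ n, ∀ x ∈ interior {x | ∀ n, ‖f n x‖ ≤ K * b n}, ‖f n x‖ ≤ K * b n :=
    fun n _ hx => interior_subset hx n
  refine ⟨_, isOpen_interior, hK, ?_, ?_⟩
  · exact continuousOn_tsum (fun n => (hf n).continuousOn) (hbs.mul_left (K : ℝ)) hMtest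
  · exact (tendstoUniformlyOn_tsum_nat (hbs.mul_left (K : ℝ)) hMtest).comp_add_one

end Baire

/-- if the state space `𝒮` (realized in `T((ℝ^d))` via `ι`) is closed
under all dilations `d_λ`, `λ > 0`, is completely metrizable, and all the level pairings
`x ↦ ⟨π_n v, π_n (ι x)⟩` are continuous for dual elements `v`, then for every `u ∈ 𝒮*`
there is a nonempty open subset `U ⊆ 𝒮` on which `x ↦ ⟨u, ι x⟩` is continuous and is the
uniform limit of its defining partial sums. -/
theorem continuity_on_open_subset {d : ℕ} (𝒮 : Type*)
    [MetricSpace 𝒮] [CompleteSpace 𝒮] [Nonempty 𝒮]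
    (ι : 𝒮 → TA d)
    (hdil : ∀ lam : ℝ, 0 < lam → ∀ x : 𝒮, ∃ y : 𝒮, ι y = dil lam (ι x))
    (hcont : ∀ v : TA d, (∀ x : 𝒮, Summable fun n => |levelPair v (ι x) n|) →
      ∀ n : ℕ, Continuous (fun x : 𝒮 => levelPair v (ι x) n))
    (u : TA d)
    (hu : ∀ x : 𝒮, Summable (fun n => |levelPair u (ι x) n|)) :
    ∃ U : Set 𝒮, IsOpen U ∧ U.Nonempty ∧
      ContinuousOn (fun x : 𝒮 => ∑' n, levelPair u (ι x) n) U ∧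
      TendstoUniformlyOn (fun N x => ∑ n ∈ Finset.range (N + 1), levelPair u (ι x) n)
        (fun x => ∑' n, levelPair u (ι x) n) Filter.atTop U := by
  have hdom : ∀ x, ∃ C : ℝ, ∀ n, ‖levelPair u (ι x) n‖ ≤ C * 2⁻¹ ^ n := by
    intro x
    obtain ⟨y, hy⟩ := hdil 2 two_pos x
    have hsum : Summable fun n => (2 : ℝ) ^ n * levelPair u (ι x) n :=
      (hu y).of_abs.congr fun n => by rw [hy, levelPair_dil]
    exact exists_norm_le_mul_inv_pow_of_summable two_pos hsum
  exact exists_isOpen_tendstoUniformlyOn_tsum (hcont u hu) (fun n => by positivity)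
    (summable_geometric_of_lt_one (by norm_num) (by norm_num)) hdom
end

section
/- Shuffle-compatibility implies submultiplicativity and multiplicativity of the pairing: for a shuffle-compatible partition Π of multi-indices, if u, v ∈ 𝒮(S)* then u ⧢ v ∈ 𝒮(S)*, |u ⧢ v|_x ≤ |u|_x · |v|_x, and ⟨u, x⟩⟨v, x⟩ = ⟨u ⧢ v, x⟩ for every group-like x ∈ 𝒮(S). -/
/-- The subword of `K` obtained by keeping exactly the positions in `s`. -/
def subword {d : ℕ} (K : List (Fin d)) (s : Finset (Fin K.length)) : List (Fin d) :=
  ((List.finRange K.length).filter (fun i => i ∈ s)).map (fun i => K.get i)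

/-- The shuffle product on `T((ℝ^d))`. -/
noncomputable def shMul {d : ℕ} (u v : TA d) : TA d :=
  fun K => ∑ s : Finset (Fin K.length), u (subword K s) * v (subword K sᶜ)

/-- The basis element `e_I`. -/
def delta {d : ℕ} (I : List (Fin d)) : TA d := fun J => if J = I then 1 else 0

/-- The set `𝒮(S)` of group-like elements with first level in `S`. -/
noncomputable def GroupLikeTA {d : ℕ} (S : Set (Fin d → ℝ)) : Set (TA d) :=
  {x | x [] = 1 ∧ (fun i => x [i]) ∈ S ∧
    ∀ I J : List (Fin d), x I * x J = ∑' K : List (Fin d), shMul (delta I) (delta J) K * x K}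

/-- Partitions of the set of all words, given by an index map `part`; each block contains
only words of one fixed length. -/
def SameLengthBlocks {d : ℕ} (part : List (Fin d) → ℕ) : Prop :=
  ∀ I J : List (Fin d), part I = part J → I.length = J.length

/-- Shuffle-compatibility of a partition: the shuffle of two blocks is supported in a
single block. -/
noncomputable def ShuffleCompatible {d : ℕ} (part : List (Fin d) → ℕ) : Prop :=
  ∀ k₁ k₂ : ℕ, ∃ k : ℕ, ∀ I J : List (Fin d), part I = k₁ → part J = k₂ →
    ∀ K : List (Fin d), shMul (delta I) (delta J) K ≠ 0 → part K = k

/-- The block sum `Σ_{I ∈ Π_k} u_I x_I`. -/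
noncomputable def blockSum {d : ℕ} (part : List (Fin d) → ℕ) (u x : TA d) (k : ℕ) : ℝ :=
  ∑' I : {I : List (Fin d) // part I = k}, u I * x I

/-- The semi-norm `|u|_x = Σ_k |Σ_{I ∈ Π_k} u_I x_I|`. -/
noncomputable def seminorm' {d : ℕ} (part : List (Fin d) → ℕ) (u x : TA d) : ℝ :=
  ∑' k : ℕ, |blockSum part u x k|

/-- Membership `u ∈ 𝒮(S)*`: `|u|_x < ∞` for every group-like `x`. -/
noncomputable def DualMem {d : ℕ} (part : List (Fin d) → ℕ) (S : Set (Fin d → ℝ))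
    (u : TA d) : Prop :=
  ∀ x ∈ GroupLikeTA S, Summable (fun k => |blockSum part u x k|)

/-- The pairing `⟨u, x⟩ = Σ_n ⟨π_n(u), π_n(x)⟩`. -/
noncomputable def pairTA {d : ℕ} (u x : TA d) : ℝ := ∑' n : ℕ, levelPair u x n

/-!
For a group-like `x` put `A k = Σ_{I ∈ Π_k} u_I x_I` and `B k = Σ_{J ∈ Π_k} v_J x_J`; these are
finite sums, since a block consists of words of one length. Expanding `x_I x_J` by the shuffle
identity and using shuffle-compatibility gives
`A k₁ · B k₂ = Σ_{K ∈ Π_k} ⟨u|_{Π_{k₁}} ⧢ v|_{Π_{k₂}}, e_K⟩ x_K` with `k = k₁ ⧢ k₂`, and summing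
over all pairs with `k₁ ⧢ k₂ = k` recovers the `k`-th block sum of `u ⧢ v`. So the block sums of
`u ⧢ v` are the fibre sums of the absolutely summable double series `A k₁ · B k₂`, which gives
their absolute summability, `|u ⧢ v|_x ≤ |u|_x |v|_x`, and, by the Cauchy product, that they
add up to `(Σ A)(Σ B)`. Finally, every block lies in a single level, so the
pairing `⟨w, x⟩` is the sum of the block sums of `w`.
-/

section FiberwiseSums

variable {β γ E : Type*} [NormedAddCommGroup E]

lemma summable_norm_and_tsum_norm_le_of_hasSum_fiberwise {f : β → E} {g : β → γ} {c : γ → E}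
    (hf : Summable fun p => ‖f p‖) (hc : ∀ k, HasSum (fun p : g ⁻¹' {k} => f p) (c k)) :
    Summable (fun k => ‖c k‖) ∧ ∑' k, ‖c k‖ ≤ ∑' p, ‖f p‖ := by
  have hfiber := hf.hasSum.tsum_fiberwise g
  have hbound : ∀ k, ‖c k‖ ≤ ∑' p : g ⁻¹' {k}, ‖f p‖ := fun k =>
    (hc k).tsum_eq ▸ norm_tsum_le_tsum_norm (hf.subtype _)
  have hsum : Summable (fun k => ‖c k‖) :=
    .of_nonneg_of_le (fun _ => norm_nonneg _) hbound hfiber.summable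
  exact ⟨hsum, hfiber.tsum_eq ▸ hsum.tsum_le_tsum hbound hfiber.summable⟩

lemma tsum_eq_of_hasSum_fiberwise [CompleteSpace E] {f : β → E} {g : β → γ} {c : γ → E}
    (hf : Summable f) (hc : ∀ k, HasSum (fun p : g ⁻¹' {k} => f p) (c k)) :
    ∑' k, c k = ∑' p, f p :=
  (tsum_congr fun k => (hc k).tsum_eq.symm).trans (hf.hasSum.tsum_fiberwise g).tsum_eq

end FiberwiseSums

namespace SameLengthBlocks

variable {d : ℕ} {part : List (Fin d) → ℕ}

lemma finite_block (hlen : SameLengthBlocks part) (k : ℕ) : {I | part I = k}.Finite := by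
  obtain hempty | ⟨I₀, hI₀⟩ := Set.eq_empty_or_nonempty {I | part I = k}
  · exact hempty ▸ Set.finite_empty
  · exact (List.finite_length_eq (Fin d) I₀.length).subset
      fun I hI => hlen I I₀ (hI.trans hI₀.symm)

noncomputable def block (hlen : SameLengthBlocks part) (k : ℕ) : Finset (List (Fin d)) :=
  (hlen.finite_block k).toFinset

@[simp]
lemma mem_block (hlen : SameLengthBlocks part) {k : ℕ} {I : List (Fin d)} :
    I ∈ hlen.block k ↔ part I = k :=
  Set.Finite.mem_toFinset _

lemma coe_block (hlen : SameLengthBlocks part) (k : ℕ) :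
    (hlen.block k : Set (List (Fin d))) = {I | part I = k} :=
  Set.Finite.coe_toFinset _

lemma blockSum_eq_sum (hlen : SameLengthBlocks part) (u x : TA d) (k : ℕ) :
    blockSum part u x k = ∑ I ∈ hlen.block k, u I * x I :=
  ((Equiv.subtypeEquivRight fun _ => hlen.mem_block.symm).tsum_eq
    fun I : hlen.block k => u I * x I).trans
    (Finset.tsum_subtype (hlen.block k) fun I => u I * x I)

noncomputable def blockLength (hlen : SameLengthBlocks part) (k : ℕ) : ℕ :=
  (hlen.block k).sup List.length

lemma blockLength_eq (hlen : SameLengthBlocks part) {I : List (Fin d)} {k : ℕ} (hI : part I = k) :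
    hlen.blockLength k = I.length :=
  le_antisymm
    (Finset.sup_le fun J hJ => (hlen J I ((hlen.mem_block.mp hJ).trans hI.symm)).le)
    (Finset.le_sup (f := List.length) (hlen.mem_block.mpr hI))

noncomputable def blocksOfLengthEquiv (hlen : SameLengthBlocks part) (n : ℕ) :
    (Σ k : hlen.blockLength ⁻¹' {n}, {I // part I = k}) ≃ {I : List (Fin d) // I.length = n} where
  toFun p := ⟨p.2, (hlen.blockLength_eq p.2.2).symm.trans p.1.2⟩
  invFun I := ⟨⟨part I, (hlen.blockLength_eq (I := I.1) rfl).trans I.2⟩, ⟨I, rfl⟩⟩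
  left_inv p := Sigma.subtype_ext (Subtype.ext p.2.2) rfl
  right_inv _ := rfl

lemma hasSum_blockSum_blockLength_fiber (hlen : SameLengthBlocks part) (w x : TA d) (n : ℕ) :
    HasSum (fun k : hlen.blockLength ⁻¹' {n} => blockSum part w x k) (levelPair w x n) := by
  have : Finite {I : List (Fin d) // I.length = n} := (List.finite_length_eq (Fin d) n).to_subtype
  have hfin : ∀ k, Finite {I // part I = k} := fun k => (hlen.finite_block k).to_subtype
  refine HasSum.sigma (f := fun p : Σ k : hlen.blockLength ⁻¹' {n}, {I // part I = k} =>
    w p.2 * x p.2) ?_ fun k => Summable.of_finite.hasSum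
  exact (hlen.blocksOfLengthEquiv n).hasSum_iff.mpr Summable.of_finite.hasSum

lemma pairTA_eq_tsum_blockSum (hlen : SameLengthBlocks part) {w x : TA d}
    (hw : Summable (blockSum part w x)) :
    pairTA w x = ∑' k, blockSum part w x k :=
  (tsum_congr fun n => (hlen.hasSum_blockSum_blockLength_fiber w x n).tsum_eq.symm).trans
    (hw.hasSum.tsum_fiberwise hlen.blockLength).tsum_eq

end SameLengthBlocks

section Shuffle

variable {d : ℕ}

lemma sum_mul_delta_apply (S : Finset (List (Fin d))) (a : TA d) (J : List (Fin d)) :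
    ∑ I ∈ S, a I * delta I J = (S : Set (List (Fin d))).indicator a J := by
  simp [delta, Set.indicator_apply]

lemma sum_sum_mul_shMul_delta (S T : Finset (List (Fin d))) (a b : TA d) (K : List (Fin d)) :
    ∑ I ∈ S, ∑ J ∈ T, a I * b J * shMul (delta I) (delta J) K
      = shMul ((S : Set (List (Fin d))).indicator a) ((T : Set (List (Fin d))).indicator b) K := by
  simp only [shMul, Finset.mul_sum]
  simp only [← sum_mul_delta_apply, Finset.sum_mul_sum]
  refine (Finset.sum_congr rfl fun I _ => Finset.sum_comm).trans <| Finset.sum_comm.trans <|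
    Finset.sum_congr rfl fun s _ => Finset.sum_congr rfl fun I _ =>
      Finset.sum_congr rfl fun J _ => by ring

lemma one_le_shMul_delta_subword (K : List (Fin d)) (s : Finset (Fin K.length)) :
    1 ≤ shMul (delta (subword K s)) (delta (subword K sᶜ)) K := by
  have hnonneg : ∀ I J : List (Fin d), 0 ≤ delta I J := fun I J => by
    unfold delta; split_ifs <;> norm_num
  calc (1 : ℝ) = delta (subword K s) (subword K s) * delta (subword K sᶜ) (subword K sᶜ) := by
        simp [delta]
    _ ≤ _ := Finset.single_le_sum
      (f := fun t => delta (subword K s) (subword K t) * delta (subword K sᶜ) (subword K tᶜ))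
      (fun t _ => mul_nonneg (hnonneg _ _) (hnonneg _ _)) (Finset.mem_univ s)

end Shuffle

namespace ShuffleCompatible

variable {d : ℕ} {part : List (Fin d) → ℕ}

noncomputable def target (hcompat : ShuffleCompatible part) (p : ℕ × ℕ) : ℕ :=
  (hcompat p.1 p.2).choose

lemma part_eq_target (hcompat : ShuffleCompatible part) {I J K : List (Fin d)}
    (hK : shMul (delta I) (delta J) K ≠ 0) : part K = hcompat.target (part I, part J) :=
  (hcompat (part I) (part J)).choose_spec I J rfl rfl K hK

lemma part_eq_target_subword (hcompat : ShuffleCompatible part) (K : List (Fin d))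
    (s : Finset (Fin K.length)) :
    part K = hcompat.target (part (subword K s), part (subword K sᶜ)) :=
  hcompat.part_eq_target (one_pos.trans_le (one_le_shMul_delta_subword K s)).ne'

lemma mul_eq_sum_block (hlen : SameLengthBlocks part) (hcompat : ShuffleCompatible part)
    {x : TA d} (hx : ∀ I J, x I * x J = ∑' K, shMul (delta I) (delta J) K * x K)
    (I J : List (Fin d)) :
    x I * x J = ∑ K ∈ hlen.block (hcompat.target (part I, part J)),
      shMul (delta I) (delta J) K * x K :=
  (hx I J).trans <| tsum_eq_sum fun K hK => by
    by_contra hne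
    exact hK (hlen.mem_block.mpr (hcompat.part_eq_target (left_ne_zero_of_mul hne)))

lemma blockSum_mul_blockSum (hlen : SameLengthBlocks part) (hcompat : ShuffleCompatible part)
    {x : TA d} (hx : ∀ I J, x I * x J = ∑' K, shMul (delta I) (delta J) K * x K)
    (u v : TA d) (p : ℕ × ℕ) :
    blockSum part u x p.1 * blockSum part v x p.2
      = ∑ K ∈ hlen.block (hcompat.target p),
          shMul ({I | part I = p.1}.indicator u) ({I | part I = p.2}.indicator v) K * x K := by
  calc blockSum part u x p.1 * blockSum part v x p.2
      = ∑ I ∈ hlen.block p.1, ∑ J ∈ hlen.block p.2, u I * v J * (x I * x J) := by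
        rw [hlen.blockSum_eq_sum, hlen.blockSum_eq_sum, Finset.sum_mul_sum]
        refine Finset.sum_congr rfl fun I _ => Finset.sum_congr rfl fun J _ => by ring
    _ = ∑ I ∈ hlen.block p.1, ∑ J ∈ hlen.block p.2, ∑ K ∈ hlen.block (hcompat.target p),
          u I * v J * shMul (delta I) (delta J) K * x K := by
        refine Finset.sum_congr rfl fun I hI => Finset.sum_congr rfl fun J hJ => ?_
        rw [mul_eq_sum_block hlen hcompat hx, hlen.mem_block.mp hI, hlen.mem_block.mp hJ,
          Finset.mul_sum]
        exact Finset.sum_congr rfl fun K _ => by ring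
    _ = ∑ K ∈ hlen.block (hcompat.target p), (∑ I ∈ hlen.block p.1, ∑ J ∈ hlen.block p.2,
          u I * v J * shMul (delta I) (delta J) K) * x K := by
        simp only [Finset.sum_mul]
        exact (Finset.sum_congr rfl fun I _ => Finset.sum_comm).trans Finset.sum_comm
    _ = _ := by simp only [sum_sum_mul_shMul_delta, hlen.coe_block]

-- Each splitting `s` of `K` contributes to exactly one pair of blocks, the one containing
-- `subword K s` and `subword K sᶜ`.
lemma hasSum_shMul_indicator (hcompat : ShuffleCompatible part) (u v : TA d)
    {K : List (Fin d)} {k : ℕ} (hK : part K = k) :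
    HasSum (fun p : hcompat.target ⁻¹' {k} =>
        shMul ({I | part I = p.1.1}.indicator u) ({I | part I = p.1.2}.indicator v) K)
      (shMul u v K) := by
  refine hasSum_sum fun s _ => ?_
  have hq : (part (subword K s), part (subword K sᶜ)) ∈ hcompat.target ⁻¹' {k} :=
    hK ▸ (hcompat.part_eq_target_subword K s).symm
  convert hasSum_ite_eq (⟨_, hq⟩ : hcompat.target ⁻¹' {k}) (u (subword K s) * v (subword K sᶜ))
    using 2 with p
  simp only [Set.indicator_apply, Set.mem_ofPred_eq, Subtype.ext_iff, Prod.ext_iff]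
  rw [ite_zero_mul_ite_zero]
  exact if_congr (and_congr eq_comm eq_comm) rfl rfl

lemma hasSum_blockSum_shMul (hlen : SameLengthBlocks part) (hcompat : ShuffleCompatible part)
    {x : TA d} (hx : ∀ I J, x I * x J = ∑' K, shMul (delta I) (delta J) K * x K)
    (u v : TA d) (k : ℕ) :
    HasSum (fun p : hcompat.target ⁻¹' {k} => blockSum part u x p.1.1 * blockSum part v x p.1.2)
      (blockSum part (shMul u v) x k) := by
  have hsummand : (fun p : hcompat.target ⁻¹' {k} =>
        blockSum part u x p.1.1 * blockSum part v x p.1.2) = fun p =>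
      ∑ K ∈ hlen.block k,
        shMul ({I | part I = p.1.1}.indicator u) ({I | part I = p.1.2}.indicator v) K * x K :=
    funext fun p => by rw [blockSum_mul_blockSum hlen hcompat hx, p.2]
  rw [hsummand, hlen.blockSum_eq_sum]
  exact hasSum_sum fun K hK =>
    (hcompat.hasSum_shMul_indicator u v (hlen.mem_block.mp hK)).mul_right (x K)

end ShuffleCompatible

/-- for a shuffle-compatible partition, if `u, v ∈ 𝒮(S)*` then
`u ⧢ v ∈ 𝒮(S)*`, `|u ⧢ v|_x ≤ |u|_x |v|_x`, and `⟨u,x⟩⟨v,x⟩ = ⟨u ⧢ v, x⟩` for every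
group-like `x`. -/
theorem shuffle_compatible_submultiplicative {d : ℕ}
    (Sset : Set (Fin d → ℝ)) (part : List (Fin d) → ℕ)
    (hlen : SameLengthBlocks part) (hcompat : ShuffleCompatible part)
    (u v : TA d)
    (hu : DualMem part Sset u) (hv : DualMem part Sset v) :
    DualMem part Sset (shMul u v) ∧
    ∀ x ∈ GroupLikeTA Sset,
      seminorm' part (shMul u v) x ≤ seminorm' part u x * seminorm' part v x ∧
      pairTA u x * pairTA v x = pairTA (shMul u v) x := by
  have key : ∀ x ∈ GroupLikeTA Sset,
      Summable (fun k => |blockSum part (shMul u v) x k|) ∧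
      seminorm' part (shMul u v) x ≤ seminorm' part u x * seminorm' part v x ∧
      pairTA u x * pairTA v x = pairTA (shMul u v) x := by
    intro x hx
    have hA : Summable fun k => ‖blockSum part u x k‖ := hu x hx
    have hB : Summable fun k => ‖blockSum part v x k‖ := hv x hx
    have hnorm : Summable fun p : ℕ × ℕ => ‖blockSum part u x p.1‖ * ‖blockSum part v x p.2‖ :=
      hA.mul_of_nonneg hB (fun _ => norm_nonneg _) (fun _ => norm_nonneg _)
    have hprod : Summable fun p : ℕ × ℕ => ‖blockSum part u x p.1 * blockSum part v x p.2‖ := by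
      simpa only [norm_mul] using hnorm
    have hfiber := hcompat.hasSum_blockSum_shMul hlen hx.2.2 u v
    obtain ⟨hsum, hle⟩ := summable_norm_and_tsum_norm_le_of_hasSum_fiberwise hprod hfiber
    refine ⟨hsum, ?_, ?_⟩
    · calc seminorm' part (shMul u v) x
          ≤ ∑' p : ℕ × ℕ, ‖blockSum part u x p.1‖ * ‖blockSum part v x p.2‖ := by
            simpa only [seminorm', Real.norm_eq_abs, abs_mul] using hle
        _ = seminorm' part u x * seminorm' part v x := (hA.tsum_mul_tsum hB hnorm).symm
    · rw [hlen.pairTA_eq_tsum_blockSum hA.of_norm, hlen.pairTA_eq_tsum_blockSum hB.of_norm,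
        hlen.pairTA_eq_tsum_blockSum hsum.of_norm, tsum_mul_tsum_of_summable_norm hA hB,
        tsum_eq_of_hasSum_fiberwise hprod.of_norm hfiber]
  exact ⟨fun x hx => (key x hx).1, fun x hx => (key x hx).2⟩
end
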